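/- Let Θ1 = J1 + B1 and Θ2 = J2 + B2, with J = (J1, J2) of rank r0, rank(Bk) = rk for k = 1,2, rank((B1, B2)) = r1 + r2, and rank(Θk) = r0 + rk for k = 1,2. Then there exists at most one decomposition {J1, J2, B1, B2} satisfying the orthogonality condition JᵀB = 0 (where B = (B1, B2)). -/

import Mathlib

open Matrix BigOperators

/-- Frobenius norm of a real matrix. -/
noncomputable def frobNorm {m n : Type*} [Fintype m] [Fintype n]
    (X : Matrix m n ℝ) : ℝ :=
  Real.sqrt (∑ i, ∑ j, (X i j) ^ 2)

/-- Nuclear norm: sum of singular values, i.e. the sum of the square roots of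
the eigenvalues of `Xᴴ * X`. -/
noncomputable def nuclearNorm {m n : Type*} [Fintype m] [Fintype n] [DecidableEq n]
    (X : Matrix m n ℝ) : ℝ :=
  ∑ i, Real.sqrt ((show (Xᵀ * X).IsHermitian by
    simp [Matrix.IsHermitian, Matrix.transpose_mul]).eigenvalues i)

/-!
Write `V` for the column space of `J = (J₁, J₂)`. Orthogonality makes `V` and the column
space of `B = (B₁, B₂)` disjoint, so `col Θₖ ⊆ V ⊕ col Bₖ`, and the rank condition on `Θₖ`
forces equality. Since `rank B = r₁ + r₂`, the spaces `V`, `col B₁`, `col B₂` are independent,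
hence `V = col Θ₁ ∩ col Θ₂` by modularity: the joint space is determined by `Θ₁, Θ₂`.
Two decompositions then differ by `D = J - J' = B' - B` whose columns lie in `V` and are
orthogonal to `V`, so `D = 0`.
-/

open LinearMap Module

theorem sup_inf_sup_eq_left_of_disjoint {α : Type*} [Lattice α] [OrderBot α] [IsModularLattice α]
    {a b c : α} (hbc : Disjoint b c) (ha : Disjoint a (b ⊔ c)) : (a ⊔ b) ⊓ (a ⊔ c) = a := by
  have hb : Disjoint b (c ⊔ a) := hbc.disjoint_sup_right_of_disjoint_sup_left ha.symm
  rw [sup_inf_assoc_of_le b le_sup_left, sup_comm a c, hb.eq_bot, sup_bot_eq]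

namespace Submodule

variable {K V : Type*} [DivisionRing K] [AddCommGroup V] [Module K V]

theorem finrank_sup_of_disjoint {U W : Submodule K V} [FiniteDimensional K U]
    [FiniteDimensional K W] (h : Disjoint U W) :
    finrank K ↥(U ⊔ W) = finrank K U + finrank K W := by
  rw [← finrank_sup_add_finrank_inf_eq, h.eq_bot, finrank_bot, add_zero]

theorem disjoint_of_finrank_sup_eq_add {U W : Submodule K V} [FiniteDimensional K U]
    [FiniteDimensional K W] (h : finrank K ↥(U ⊔ W) = finrank K U + finrank K W) :
    Disjoint U W := by
  have := finrank_sup_add_finrank_inf_eq U W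
  rw [disjoint_iff, ← finrank_eq_zero]
  omega

theorem eq_sup_of_le_of_finrank_eq {T U W : Submodule K V} [FiniteDimensional K U]
    [FiniteDimensional K W] (hUW : Disjoint U W) (hT : T ≤ U ⊔ W)
    (h : finrank K T = finrank K U + finrank K W) : T = U ⊔ W :=
  eq_of_le_of_finrank_eq hT (h.trans (finrank_sup_of_disjoint hUW).symm)

end Submodule

namespace Matrix

variable {R l m n n₁ n₂ : Type*}

section CommRing

variable [CommRing R]

theorem fromCols_add (A₁ B₁ : Matrix m n₁ R) (A₂ B₂ : Matrix m n₂ R) :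
    fromCols (A₁ + B₁) (A₂ + B₂) = fromCols A₁ A₂ + fromCols B₁ B₂ := by
  ext i (j | j) <;> rfl

theorem range_mulVecLin_fromCols [Fintype n₁] [Fintype n₂] (A₁ : Matrix m n₁ R)
    (A₂ : Matrix m n₂ R) :
    range (fromCols A₁ A₂).mulVecLin = range A₁.mulVecLin ⊔ range A₂.mulVecLin := by
  simp only [range_mulVecLin, ← Submodule.span_union, ← Set.Sum.elim_range]
  congr 2
  ext (j | j) <;> rfl

theorem range_mulVecLin_add_le [Fintype n] (A B : Matrix m n R) :
    range (A + B).mulVecLin ≤ range A.mulVecLin ⊔ range B.mulVecLin := by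
  rw [mulVecLin_add]
  exact range_add_le _ _

theorem range_mulVecLin_le_ker_iff [Fintype m] [Fintype n] (A : Matrix m n R)
    (B : Matrix l m R) : range A.mulVecLin ≤ ker B.mulVecLin ↔ B * A = 0 := by
  classical
  rw [range_le_ker_iff, ← mulVecLin_mul, ← toLin'_apply', map_eq_zero_iff _ toLin'.injective]

theorem range_mulVecLin_le_ker_transpose_of_transpose_mul_eq_zero [Fintype m] [Fintype n]
    [Fintype n₁] {A : Matrix m n R} {B : Matrix m n₁ R} (h : Aᵀ * B = 0) :
    range A.mulVecLin ≤ ker Bᵀ.mulVecLin := by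
  rw [range_mulVecLin_le_ker_iff, ← transpose_transpose A, ← transpose_mul, h, transpose_zero]

end CommRing

section Field

variable [Field R] [Fintype m] [Fintype n]

theorem range_mulVecLin_eq_sup_of_rank_eq {Θ J B : Matrix m n R} {V : Submodule R (m → R)}
    (hΘ : Θ = J + B) (hJ : range J.mulVecLin ≤ V) (hVB : Disjoint V (range B.mulVecLin))
    (hrank : Θ.rank = finrank R V + B.rank) : range Θ.mulVecLin = V ⊔ range B.mulVecLin :=
  Submodule.eq_sup_of_le_of_finrank_eq hVB
    (hΘ ▸ (range_mulVecLin_add_le J B).trans (sup_le_sup_right hJ _)) hrank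

variable [LinearOrder R] [IsStrictOrderedRing R]

theorem disjoint_range_mulVecLin_ker_transpose (A : Matrix m n R) :
    Disjoint (range A.mulVecLin) (ker Aᵀ.mulVecLin) := by
  rw [Submodule.disjoint_def]
  rintro _ ⟨x, rfl⟩ hx
  have : x ∈ ker (Aᵀ * A).mulVecLin := by
    rwa [mem_ker, mulVecLin_mul, LinearMap.comp_apply]
  rwa [ker_mulVecLin_transpose_mul_self, mem_ker] at this

theorem disjoint_range_mulVecLin_of_transpose_mul_eq_zero [Fintype n₁] {A : Matrix m n R}
    {B : Matrix m n₁ R} (h : Aᵀ * B = 0) : Disjoint (range A.mulVecLin) (range B.mulVecLin) :=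
  ((disjoint_range_mulVecLin_ker_transpose B).mono_right
    (range_mulVecLin_le_ker_transpose_of_transpose_mul_eq_zero h)).symm

theorem eq_of_add_eq_add_of_range_eq {J J' B B' : Matrix m n R} (hsum : J + B = J' + B')
    (hrange : range J.mulVecLin = range J'.mulVecLin) (h : Jᵀ * B = 0) (h' : J'ᵀ * B' = 0) :
    J = J' := by
  classical
  set D := J - J'
  have hD : D = B' - B := by rw [sub_eq_sub_iff_add_eq_add, hsum, add_comm]
  have hrangeD : range D.mulVecLin ≤ range J.mulVecLin := by
    rintro _ ⟨x, rfl⟩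
    rw [mulVecLin_apply, sub_mulVec]
    exact sub_mem ⟨x, rfl⟩ (hrange ▸ ⟨x, rfl⟩)
  have hB := range_mulVecLin_le_ker_transpose_of_transpose_mul_eq_zero h
  have hB' := hrange ▸ range_mulVecLin_le_ker_transpose_of_transpose_mul_eq_zero h'
  have hDD : range D.mulVecLin ≤ ker Dᵀ.mulVecLin := fun v hv ↦ by
    have hvB : Bᵀ *ᵥ v = 0 := hB (hrangeD hv)
    have hvB' : B'ᵀ *ᵥ v = 0 := hB' (hrangeD hv)
    rw [mem_ker, mulVecLin_apply, hD, transpose_sub, sub_mulVec, hvB, hvB', sub_zero]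
  have hD0 : D.mulVecLin = 0 :=
    range_eq_bot.mp ((disjoint_range_mulVecLin_ker_transpose D).eq_bot_of_le hDD)
  rwa [← toLin'_apply', map_eq_zero_iff _ toLin'.injective, sub_eq_zero] at hD0

theorem range_mulVecLin_fromCols_eq_inf [Fintype n₁] [Fintype n₂]
    {Θ₁ J₁ B₁ : Matrix m n₁ R} {Θ₂ J₂ B₂ : Matrix m n₂ R}
    (hΘ₁ : Θ₁ = J₁ + B₁) (hΘ₂ : Θ₂ = J₂ + B₂)
    (horth : (fromCols J₁ J₂)ᵀ * fromCols B₁ B₂ = 0)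
    (hB : (fromCols B₁ B₂).rank = B₁.rank + B₂.rank)
    (hr₁ : Θ₁.rank = (fromCols J₁ J₂).rank + B₁.rank)
    (hr₂ : Θ₂.rank = (fromCols J₁ J₂).rank + B₂.rank) :
    range (fromCols J₁ J₂).mulVecLin = range Θ₁.mulVecLin ⊓ range Θ₂.mulVecLin := by
  have hVW := disjoint_range_mulVecLin_of_transpose_mul_eq_zero horth
  rw [range_mulVecLin_fromCols B₁ B₂] at hVW
  have hJ := range_mulVecLin_fromCols J₁ J₂
  rw [range_mulVecLin_eq_sup_of_rank_eq hΘ₁ (hJ ▸ le_sup_left) (hVW.mono_right le_sup_left) hr₁,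
    range_mulVecLin_eq_sup_of_rank_eq hΘ₂ (hJ ▸ le_sup_right) (hVW.mono_right le_sup_right) hr₂]
  have hB₁₂ : Disjoint (range B₁.mulVecLin) (range B₂.mulVecLin) :=
    Submodule.disjoint_of_finrank_sup_eq_add (range_mulVecLin_fromCols B₁ B₂ ▸ hB)
  exact (sup_inf_sup_eq_left_of_disjoint hB₁₂ hVW).symm

end Field

end Matrix

/-- uniqueness of the joint/individual decomposition under the
rank conditions and the orthogonality condition `Jᵀ B = 0`. -/
theorem decomposition_unique (n p1 p2 r0 r1 r2 : ℕ)
    (Θ1 : Matrix (Fin n) (Fin p1) ℝ) (Θ2 : Matrix (Fin n) (Fin p2) ℝ)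
    (J1 J1' : Matrix (Fin n) (Fin p1) ℝ) (J2 J2' : Matrix (Fin n) (Fin p2) ℝ)
    (B1 B1' : Matrix (Fin n) (Fin p1) ℝ) (B2 B2' : Matrix (Fin n) (Fin p2) ℝ)
    (hΘ1 : Θ1 = J1 + B1) (hΘ2 : Θ2 = J2 + B2)
    (hΘ1' : Θ1 = J1' + B1') (hΘ2' : Θ2 = J2' + B2')
    (hJ : (Matrix.fromCols J1 J2).rank = r0)
    (hJ' : (Matrix.fromCols J1' J2').rank = r0)
    (hB1 : B1.rank = r1) (hB2 : B2.rank = r2)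
    (hB1' : B1'.rank = r1) (hB2' : B2'.rank = r2)
    (hB : (Matrix.fromCols B1 B2).rank = r1 + r2)
    (hB' : (Matrix.fromCols B1' B2').rank = r1 + r2)
    (hr1 : Θ1.rank = r0 + r1) (hr2 : Θ2.rank = r0 + r2)
    (horth : (Matrix.fromCols J1 J2)ᵀ * Matrix.fromCols B1 B2 = 0)
    (horth' : (Matrix.fromCols J1' J2')ᵀ * Matrix.fromCols B1' B2' = 0) :
    J1 = J1' ∧ J2 = J2' ∧ B1 = B1' ∧ B2 = B2' := by
  have hrange : range (fromCols J1 J2).mulVecLin = range (fromCols J1' J2').mulVecLin := by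
    rw [range_mulVecLin_fromCols_eq_inf hΘ1 hΘ2 horth (by rw [hB, hB1, hB2])
        (by rw [hr1, hJ, hB1]) (by rw [hr2, hJ, hB2]),
      range_mulVecLin_fromCols_eq_inf hΘ1' hΘ2' horth' (by rw [hB', hB1', hB2'])
        (by rw [hr1, hJ', hB1']) (by rw [hr2, hJ', hB2'])]
  have hsum : fromCols J1 J2 + fromCols B1 B2 = fromCols J1' J2' + fromCols B1' B2' := by
    rw [← fromCols_add, ← fromCols_add, ← hΘ1, ← hΘ2, ← hΘ1', ← hΘ2']
  obtain ⟨rfl, rfl⟩ :=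
    fromCols_inj.eq_iff.mp (eq_of_add_eq_add_of_range_eq hsum hrange horth horth')
  exact ⟨rfl, rfl, add_left_cancel (hΘ1.symm.trans hΘ1'), add_left_cancel (hΘ2.symm.trans hΘ2')⟩
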